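/- The cf1.5 semantics satisfies finitary directionality: if F = (A, R) is a finitary argumentation framework and U ⊆ A is such that no argument in A \ U attacks an argument of U, then the set of cf1.5-extensions of F↾U equals {S ∩ U | S is a cf1.5-extension of F}. -/

import Mathlib

/-!
Basic notions of abstract argumentation frameworks, following
Andrews–San Mauro, "SCC-recursiveness in infinite argumentation".
-/

universe u

/-- An argumentation framework: a set `A` of arguments together with an
attack relation `R ⊆ A × A`. -/
structure AF (α : Type u) where
  A : Set α
  R : α → α → Prop
  attack_mem : ∀ ⦃a b : α⦄, R a b → a ∈ A ∧ b ∈ A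

namespace AF

variable {α : Type u}

/-- The restriction `F↾U = (A ∩ U, R ∩ (U × U))`. -/
def restrict (F : AF α) (U : Set α) : AF α where
  A := F.A ∩ U
  R a b := F.R a b ∧ a ∈ U ∧ b ∈ U
  attack_mem := by
    intro a b h
    exact ⟨⟨(F.attack_mem h.1).1, h.2.1⟩, ⟨(F.attack_mem h.1).2, h.2.2⟩⟩

/-- `S` is conflict-free: `S ⊆ A` and no argument of `S` attacks another. -/
def ConflictFree (F : AF α) (S : Set α) : Prop :=
  S ⊆ F.A ∧ ∀ a ∈ S, ∀ b ∈ S, ¬ F.R a b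

/-- `S` is a naive extension: conflict-free and ⊆-maximal among conflict-free sets. -/
def Naive (F : AF α) (S : Set α) : Prop :=
  ConflictFree F S ∧ ∀ T, ConflictFree F T → S ⊆ T → S = T

/-- `S⁺`: the set of arguments attacked by `S`. -/
def plus (F : AF α) (S : Set α) : Set α := {x | ∃ y ∈ S, F.R y x}

/-- The range `S⊕ = S ∪ S⁺`. -/
def rng (F : AF α) (S : Set α) : Set α := S ∪ plus F S

/-- `S` is a stage extension: conflict-free with ⊆-maximal range among
conflict-free sets. -/
def Stage (F : AF α) (S : Set α) : Prop :=
  ConflictFree F S ∧ ¬ ∃ T, ConflictFree F T ∧ rng F S ⊂ rng F T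

/-- `F` is finitary: every argument has finitely many attackers. -/
def Finitary (F : AF α) : Prop := ∀ a, {x | F.R x a}.Finite

/-- There is a directed path from `a` to `b` in `F` (both being arguments of `F`). -/
def Reach (F : AF α) (a b : α) : Prop :=
  a ∈ F.A ∧ b ∈ F.A ∧ Relation.ReflTransGen F.R a b

/-- The strongly connected component of `a` in `F`. -/
def SCCof (F : AF α) (a : α) : Set α := {b | Reach F a b ∧ Reach F b a}

/-- `X` is a strongly connected component of `F`. -/
def IsSCC (F : AF α) (X : Set α) : Prop := ∃ a ∈ F.A, X = SCCof F a

/-- `D_S(X)`: the elements of `X` attacked by an element of `S` outside `X`. -/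
def Dset (F : AF α) (S X : Set α) : Set α := {b ∈ X | ∃ a ∈ S \ X, F.R a b}

/-- `S` is a cf1.5-extension of `F`. -/
def CF15 (F : AF α) (S : Set α) : Prop :=
  ConflictFree F S ∧
    ∀ X, IsSCC F X → Naive (F.restrict (X \ Dset F S X)) (S ∩ X)

/-- `S` is a stg1.5-extension of `F`. -/
def STG15 (F : AF α) (S : Set α) : Prop :=
  ConflictFree F S ∧
    ∀ X, IsSCC F X → Stage (F.restrict (X \ Dset F S X)) (S ∩ X)

/-- `C_S^α(a)`, defined by transfinite recursion. -/
noncomputable def Cseq (F : AF α) (S : Set α) (a : α) (o : Ordinal.{0}) : Set α :=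
  Ordinal.limitRecOn o (SCCof F a)
    (fun _ C => SCCof (F.restrict (C \ Dset F S C)) a)
    (fun o' _ ih => SCCof (F.restrict (⋂ β : {β : Ordinal.{0} // β < o'}, ih β.1 β.2)) a)

/-- The component ordinal `α_S(a)`: the least `α` with `a ∉ C_S^α(a)` or
`C_S^{α+1}(a) = C_S^α(a)`. -/
noncomputable def alphaS (F : AF α) (S : Set α) (a : α) : Ordinal.{0} :=
  sInf {o | a ∉ Cseq F S a o ∨ Cseq F S a (o + 1) = Cseq F S a o}

/-- `S` is an icft-extension (tfcf2-extension) of `F`. -/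
def ICFT (F : AF α) (S : Set α) : Prop :=
  ConflictFree F S ∧ ∀ a ∈ F.A,
    a ∉ Cseq F S a (alphaS F S a) ∨
      Naive (F.restrict (Cseq F S a (alphaS F S a))) (S ∩ Cseq F S a (alphaS F S a))

/-- `S` is an istgt-extension (tf-stg2-extension) of `F`. -/
def ISTGT (F : AF α) (S : Set α) : Prop :=
  ConflictFree F S ∧ ∀ a ∈ F.A,
    a ∉ Cseq F S a (alphaS F S a) ∨
      Stage (F.restrict (Cseq F S a (alphaS F S a))) (S ∩ Cseq F S a (alphaS F S a))

/-- The characteristic function `f_F`. -/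
def charF (F : AF α) (S : Set α) : Set α :=
  {x ∈ F.A | ∀ y, F.R y x → ∃ z ∈ S, F.R z y}

/-- `G` is the grounded extension of `F`: the least fixed point of `f_F`. -/
def IsGrounded (F : AF α) (G : Set α) : Prop :=
  charF F G = G ∧ ∀ T, charF F T = T → G ⊆ T

/-- `conf(F)`: the set of conflicting pairs of `F`. -/
def confl (F : AF α) : Set (α × α) := {p | F.R p.1 p.2 ∨ F.R p.2 p.1}

/-- The operator `Δ_{F,S}(D)`. -/
def DeltaOp (F : AF α) (S D : Set α) : Set α :=
  {a ∈ F.A | ∃ b ∈ S, F.R b a ∧ ¬ Reach (F.restrict (F.A \ D)) a b}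

/-- `Δ^α_{F,S}`, defined by transfinite recursion. -/
noncomputable def Deltaseq (F : AF α) (S : Set α) (o : Ordinal.{0}) : Set α :=
  Ordinal.limitRecOn o (∅ : Set α)
    (fun _ D => DeltaOp F S D)
    (fun o' _ ih => ⋃ β : {β : Ordinal.{0} // β < o'}, ih β.1 β.2)

/-- The least fixed point `Δ_{F,S}` of the monotone operator `Δ_{F,S}(·)`,
given by Knaster–Tarski as the intersection of all prefixed points. -/
def DeltaFix (F : AF α) (S : Set α) : Set α :=
  ⋂₀ {D | DeltaOp F S D ⊆ D}

end AF

/-!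
A set `S` is a cf1.5-extension exactly when it is conflict-free and every argument outside `S`
attacks itself, is attacked by `S`, or attacks a member of `S` in its own strongly connected
component. This pointwise description restricts to an unattacked part `U` directly. Conversely,
a cf1.5-extension `S` of `F↾U` extends to `F` by adding a cf1.5-extension of the part outside `U`
not attacked by `S`, so it suffices that finitary frameworks have cf1.5-extensions.

For existence, enumerate each strongly connected component by `ℕ` (components of a finitary
framework are countable). On a finite set of arguments, a greedy choice that handles upstream
components first, and a component in the order of the enumeration, leaves every excluded argument
attacked by the choice or attacking an earlier chosen member of its component. Each argument
then has only finitely many candidate reasons to be excluded, so an ultrafilter limit of the finite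
solutions is a cf1.5-extension.
-/

namespace AF

open Set Filter Relation

variable {α : Type u} {F : AF α}

theorem Reach.trans {a b c : α} (hab : Reach F a b) (hbc : Reach F b c) : Reach F a c :=
  ⟨hab.1, hbc.2.1, hab.2.2.trans hbc.2.2⟩

theorem Reach.of_restrict {U : Set α} {a b : α} (h : Reach (F.restrict U) a b) : Reach F a b :=
  ⟨h.1.1, h.2.1.1, ReflTransGen.mono (fun _ _ hxy => hxy.1) _ _ h.2.2⟩

theorem mem_SCCof_self {a : α} (ha : a ∈ F.A) : a ∈ SCCof F a :=
  ⟨⟨ha, ha, .refl⟩, ⟨ha, ha, .refl⟩⟩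

theorem SCCof_eq_of_mem {a b : α} (h : b ∈ SCCof F a) : SCCof F b = SCCof F a :=
  Set.ext fun _ => ⟨fun hc => ⟨h.1.trans hc.1, hc.2.trans h.2⟩,
    fun hc => ⟨h.2.trans hc.1, hc.2.trans h.1⟩⟩

theorem SCCof_restrict_subset (U : Set α) (a : α) : SCCof (F.restrict U) a ⊆ SCCof F a :=
  fun _ hb => ⟨hb.1.of_restrict, hb.2.of_restrict⟩

theorem ConflictFree.subset {S T : Set α} (hT : ConflictFree F T) (hST : S ⊆ T) :
    ConflictFree F S :=
  ⟨hST.trans hT.1, fun a ha b hb => hT.2 a (hST ha) b (hST hb)⟩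

theorem conflictFree_insert_iff {S : Set α} {t : α} :
    ConflictFree F (insert t S) ↔
      t ∈ F.A ∧ ¬ F.R t t ∧ (∀ s ∈ S, ¬ F.R s t ∧ ¬ F.R t s) ∧ ConflictFree F S := by
  simp only [ConflictFree, insert_subset_iff, mem_insert_iff, forall_eq_or_imp]
  grind

theorem conflictFree_restrict_iff {U S : Set α} :
    ConflictFree (F.restrict U) S ↔ ConflictFree F S ∧ S ⊆ U :=
  ⟨fun h => ⟨⟨fun _ hx => (h.1 hx).1,
      fun a ha b hb hab => h.2 a ha b hb ⟨hab, (h.1 ha).2, (h.1 hb).2⟩⟩, fun _ hx => (h.1 hx).2⟩,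
    fun ⟨h, hSU⟩ => ⟨fun _ hx => ⟨h.1 hx, hSU hx⟩, fun a ha b hb hab => h.2 a ha b hb hab.1⟩⟩

theorem naive_iff {S : Set α} :
    Naive F S ↔ ConflictFree F S ∧
      ∀ t ∈ F.A, t ∉ S → F.R t t ∨ ∃ s ∈ S, F.R s t ∨ F.R t s := by
  refine ⟨fun ⟨hS, hmax⟩ => ⟨hS, fun t ht htS => ?_⟩, fun ⟨hS, hcov⟩ => ⟨hS, fun T hT hST => ?_⟩⟩
  · by_contra! h
    have hins : ConflictFree F (insert t S) :=
      conflictFree_insert_iff.2 ⟨ht, h.1, fun s hs => h.2 s hs, hS⟩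
    exact htS ((hmax _ hins (subset_insert t S)).symm ▸ mem_insert t S)
  · refine hST.antisymm fun t ht => ?_
    by_contra htS
    rcases hcov t (hT.1 ht) htS with h | ⟨s, hs, h | h⟩
    · exact hT.2 t ht t ht h
    · exact hT.2 s (hST hs) t ht h
    · exact hT.2 t ht s (hST hs) h

def IsBlocked (F : AF α) (S : Set α) (v : α) : Prop :=
  F.R v v ∨ (∃ s ∈ S, F.R s v) ∨ ∃ w ∈ S ∩ SCCof F v, F.R v w

theorem IsBlocked.mono {S T : Set α} {v : α} (hST : S ⊆ T) (h : IsBlocked F S v) :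
    IsBlocked F T v := by
  rcases h with h | ⟨s, hs, h⟩ | ⟨w, ⟨hw, hwv⟩, h⟩
  · exact Or.inl h
  · exact Or.inr (Or.inl ⟨s, hST hs, h⟩)
  · exact Or.inr (Or.inr ⟨w, ⟨hST hw, hwv⟩, h⟩)

theorem IsBlocked.of_restrict {U S : Set α} {v : α} (h : IsBlocked (F.restrict U) S v) :
    IsBlocked F S v := by
  rcases h with h | ⟨s, hs, h⟩ | ⟨w, ⟨hw, hwv⟩, h⟩
  · exact Or.inl h.1
  · exact Or.inr (Or.inl ⟨s, hs, h.1⟩)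
  · exact Or.inr (Or.inr ⟨w, ⟨hw, SCCof_restrict_subset U v hwv⟩, h.1⟩)

theorem notMem_Dset {S X : Set α} {s : α} (hS : ConflictFree F S) (hs : s ∈ S) :
    s ∉ Dset F S X :=
  fun ⟨_, a, ha, h⟩ => hS.2 a ha.1 s hs h

theorem cf15_iff {S : Set α} :
    CF15 F S ↔ ConflictFree F S ∧ ∀ v ∈ F.A, v ∉ S → IsBlocked F S v := by
  refine ⟨fun ⟨hS, hnaive⟩ => ⟨hS, fun v hvA hvS => ?_⟩, fun ⟨hS, hcov⟩ => ⟨hS, ?_⟩⟩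
  · by_cases hatt : ∃ s ∈ S, F.R s v
    · exact Or.inr (Or.inl hatt)
    push Not at hatt
    have hvY : v ∈ SCCof F v \ Dset F S (SCCof F v) :=
      ⟨mem_SCCof_self hvA, fun ⟨_, s, hs, h⟩ => hatt s hs.1 h⟩
    rcases (naive_iff.1 (hnaive _ ⟨v, hvA, rfl⟩)).2 v ⟨hvA, hvY⟩ (fun h => hvS h.1) with
      h | ⟨s, hs, h | h⟩
    · exact Or.inl h.1
    · exact absurd h.1 (hatt s hs.1)
    · exact Or.inr (Or.inr ⟨s, hs, h.1⟩)
  · rintro X ⟨a, -, rfl⟩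
    have hSY : ∀ s ∈ S ∩ SCCof F a, s ∈ SCCof F a \ Dset F S (SCCof F a) :=
      fun s hs => ⟨hs.2, notMem_Dset hS hs.1⟩
    refine naive_iff.2 ⟨⟨fun s hs => ⟨hS.1 hs.1, hSY s hs⟩,
      fun s hs t ht h => hS.2 s hs.1 t ht.1 h.1⟩, ?_⟩
    rintro t ⟨htA, htY⟩ htS
    rcases hcov t htA (fun h => htS ⟨h, htY.1⟩) with h | ⟨s, hs, h⟩ | ⟨w, ⟨hw, hwt⟩, h⟩
    · exact Or.inl ⟨h, htY, htY⟩
    · by_cases hsX : s ∈ SCCof F a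
      · exact Or.inr ⟨s, ⟨hs, hsX⟩, Or.inl ⟨h, hSY s ⟨hs, hsX⟩, htY⟩⟩
      · exact absurd ⟨htY.1, s, ⟨hs, hsX⟩, h⟩ htY.2
    · have hwX : w ∈ SCCof F a := SCCof_eq_of_mem htY.1 ▸ hwt
      exact Or.inr ⟨w, ⟨hw, hwX⟩, Or.inr ⟨h, htY, hSY w ⟨hw, hwX⟩⟩⟩

def IsUnattacked (F : AF α) (U : Set α) : Prop :=
  ∀ a ∈ F.A \ U, ∀ b ∈ U, ¬ F.R a b

section Unattacked

variable {U : Set α}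

theorem IsUnattacked.mem_of_attacks (hU : F.IsUnattacked U) {a b : α} (h : F.R a b)
    (hb : b ∈ U) : a ∈ U := by
  by_contra ha
  exact hU a ⟨(F.attack_mem h).1, ha⟩ b hb h

theorem reflTransGen_restrict_of_mem (hU : F.IsUnattacked U) {a b : α} (hb : b ∈ U)
    (h : ReflTransGen F.R a b) :
    a ∈ U ∧ ReflTransGen (F.restrict U).R a b := by
  induction h using ReflTransGen.head_induction_on with
  | refl => exact ⟨hb, .refl⟩
  | head hac _ ih =>
    have haU := hU.mem_of_attacks hac ih.1
    exact ⟨haU, .head ⟨hac, haU, ih.1⟩ ih.2⟩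

theorem SCCof_restrict_eq (hU : F.IsUnattacked U) {v : α} (hv : v ∈ U) :
    SCCof (F.restrict U) v = SCCof F v := by
  refine (SCCof_restrict_subset U v).antisymm fun b ⟨hvb, hbv⟩ => ?_
  obtain ⟨hbU, hbv'⟩ := reflTransGen_restrict_of_mem hU hv hbv.2.2
  obtain ⟨-, hvb'⟩ := reflTransGen_restrict_of_mem hU hbU hvb.2.2
  exact ⟨⟨⟨hvb.1, hv⟩, ⟨hvb.2.1, hbU⟩, hvb'⟩, ⟨⟨hbv.1, hbU⟩, ⟨hbv.2.1, hv⟩, hbv'⟩⟩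

theorem IsBlocked.restrict (hU : F.IsUnattacked U) {S : Set α} {v : α} (hv : v ∈ U)
    (h : IsBlocked F S v) :
    IsBlocked (F.restrict U) (S ∩ U) v := by
  rcases h with h | ⟨s, hs, h⟩ | ⟨w, ⟨hw, hwv⟩, h⟩
  · exact Or.inl ⟨h, hv, hv⟩
  · have hsU := hU.mem_of_attacks h hv
    exact Or.inr (Or.inl ⟨s, ⟨hs, hsU⟩, h, hsU, hv⟩)
  · rw [← SCCof_restrict_eq hU hv] at hwv
    have hwU : w ∈ U := hwv.1.2.1.2
    exact Or.inr (Or.inr ⟨w, ⟨⟨hw, hwU⟩, hwv⟩, h, hv, hwU⟩)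

theorem cf15_restrict_inter (hU : F.IsUnattacked U) {S : Set α} (hS : CF15 F S) :
    CF15 (F.restrict U) (S ∩ U) := by
  obtain ⟨hcf, hcov⟩ := cf15_iff.1 hS
  refine cf15_iff.2 ⟨conflictFree_restrict_iff.2 ⟨hcf.subset inter_subset_left,
    inter_subset_right⟩, ?_⟩
  rintro v ⟨hvA, hvU⟩ hvS
  exact (hcov v hvA fun h => hvS ⟨h, hvU⟩).restrict hU hvU

end Unattacked

theorem Finitary.restrict {U : Set α} (hF : Finitary F) : Finitary (F.restrict U) :=
  fun a => (hF a).subset fun _ hx => hx.1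

theorem Finitary.countable_setOf_reflTransGen (hF : Finitary F) (a : α) :
    {b | ReflTransGen F.R b a}.Countable := by
  let attackers : Set α → Set α := fun X => ⋃ x ∈ X, {y | F.R y x}
  have hcount : ∀ n, (attackers^[n] {a}).Countable := by
    intro n
    induction n with
    | zero => exact countable_singleton a
    | succ n ih =>
      rw [Function.iterate_succ_apply']
      exact ih.biUnion fun x _ => (hF x).countable
  refine (countable_iUnion hcount).mono fun b hb => ?_
  induction hb using ReflTransGen.head_induction_on with
  | refl => exact mem_iUnion.2 ⟨0, rfl⟩
  | head hbc _ ih =>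
    obtain ⟨n, hn⟩ := mem_iUnion.1 ih
    refine mem_iUnion.2 ⟨n + 1, ?_⟩
    rw [Function.iterate_succ_apply']
    exact mem_biUnion hn hbc

theorem Finitary.exists_injOn_SCCof (hF : Finitary F) :
    ∃ e : α → ℕ, ∀ a, InjOn e (SCCof F a) := by
  have : ∀ X : Set α, ∃ f : α → ℕ, X.Countable → InjOn f X := fun X => by
    by_cases hX : X.Countable
    · exact (countable_iff_exists_injOn.1 hX).imp fun _ hf _ => hf
    · exact ⟨0, fun h => absurd h hX⟩
  choose f hf using this
  refine ⟨fun x => f (SCCof F x) x, fun a x hx y hy hxy => ?_⟩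
  dsimp only at hxy
  rw [SCCof_eq_of_mem hx, SCCof_eq_of_mem hy] at hxy
  exact hf _ ((hF.countable_setOf_reflTransGen a).mono fun _ hb => hb.2.2.2) hx hy hxy

/-- The order in which the finite greedy construction considers arguments: upstream components
first, and inside a component the order of `e`. -/
def Precedes (F : AF α) (e : α → ℕ) (u v : α) : Prop :=
  Reach F u v ∧ (¬ Reach F v u ∨ e u < e v)

instance (e : α → ℕ) : IsStrictOrder α (Precedes F e) where
  irrefl _ h := h.2.elim (· h.1) (lt_irrefl _)
  trans u v w huv hvw := by
    refine ⟨huv.1.trans hvw.1, not_or_of_imp fun hwu => ?_⟩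
    have hvu := hvw.1.trans hwu
    exact (huv.2.resolve_left (not_not.2 hvu)).trans
      (hvw.2.resolve_left (not_not.2 (hwu.trans huv.1)))

theorem exists_precedes_minimal (e : α → ℕ) (W : Finset α) (hW : W.Nonempty) :
    ∃ m ∈ W, ∀ x ∈ W, ¬ Precedes F e x m := by
  obtain ⟨⟨m, hm⟩, -, hmin⟩ := (W.finite_toSet.wellFoundedOn (r := Precedes F e)).has_min univ
    ⟨⟨_, hW.choose_spec⟩, trivial⟩
  exact ⟨m, hm, fun x hx => hmin ⟨x, hx⟩ trivial⟩

/-- The arguments whose membership in `S` can witness that `v` is blocked, when in-component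
blocking is only allowed by `e`-earlier arguments. -/
def candidates (F : AF α) (e : α → ℕ) (v : α) : Set α :=
  {s | F.R s v} ∪ {u | u ∈ SCCof F v ∧ e u < e v ∧ F.R v u}

theorem candidates_finite (hF : Finitary F) {e : α → ℕ} {v : α} (he : InjOn e (SCCof F v)) :
    (candidates F e v).Finite := by
  refine (hF v).union (Finite.of_finite_image ?_ (he.mono fun _ hu => hu.1))
  exact (finite_Iio (e v)).subset (image_subset_iff.2 fun _ hu => hu.2.1)

theorem isBlocked_of_mem_candidates {S : Set α} {e : α → ℕ} {v c : α} (hc : c ∈ S)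
    (hcv : c ∈ candidates F e v) : IsBlocked F S v :=
  hcv.elim (fun h => Or.inr (Or.inl ⟨c, hc, h⟩)) fun h => Or.inr (Or.inr ⟨c, ⟨hc, h.1⟩, h.2.2⟩)

theorem mem_candidates_of_not_precedes {e : α → ℕ} {v m : α} (he : ∀ a, InjOn e (SCCof F a))
    (hvm : v ≠ m) (h : F.R v m) (hnot : ¬ Precedes F e v m) : m ∈ candidates F e v := by
  have hreach : Reach F v m := ⟨(F.attack_mem h).1, (F.attack_mem h).2, .single h⟩
  simp only [Precedes, hreach, true_and, not_or, not_not, not_lt] at hnot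
  have hmv : m ∈ SCCof F v := ⟨hreach, hnot.1⟩
  exact Or.inr ⟨hmv, hnot.2.lt_of_ne fun h => hvm (he v (mem_SCCof_self hreach.1) hmv h.symm), h⟩

theorem exists_finset_solution {e : α → ℕ} (he : ∀ a, InjOn e (SCCof F a)) (W : Finset α) :
    ∃ S : Set α, S ⊆ W ∧ ConflictFree F S ∧
      ∀ v ∈ W, v ∈ F.A → v ∉ S → F.R v v ∨ ∃ c ∈ S, c ∈ candidates F e v := by
  classical
  induction W using Finset.strongInduction with
  | H W ih =>
  by_cases hWA : (W.filter (· ∈ F.A)).Nonempty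
  swap
  · exact ⟨∅, empty_subset _, ⟨empty_subset _, by simp⟩,
      fun v hv hvA _ => absurd ⟨v, Finset.mem_filter.2 ⟨hv, hvA⟩⟩ hWA⟩
  obtain ⟨m, hm, hmin⟩ := exists_precedes_minimal (F := F) e _ hWA
  obtain ⟨hmW, hmA⟩ := Finset.mem_filter.1 hm
  by_cases hmm : F.R m m
  · obtain ⟨S, hSW, hS, hcov⟩ := ih (W.erase m) (Finset.erase_ssubset hmW)
    refine ⟨S, hSW.trans (Finset.coe_subset.2 (W.erase_subset m)), hS, fun v hv hvA hvS => ?_⟩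
    obtain rfl | hvm := eq_or_ne v m
    · exact Or.inl hmm
    · exact hcov v (Finset.mem_erase.2 ⟨hvm, hv⟩) hvA hvS
  let W' := W.filter fun x => x ≠ m ∧ ¬ F.R m x ∧ ¬ F.R x m
  obtain ⟨S, hSW', hS, hcov⟩ := ih W' (Finset.filter_ssubset.2 ⟨m, hmW, by simp⟩)
  have hSnb : ∀ s ∈ S, ¬ F.R s m ∧ ¬ F.R m s := fun s hs =>
    have := (Finset.mem_filter.1 (hSW' hs)).2
    ⟨this.2.2, this.2.1⟩
  refine ⟨insert m S, insert_subset hmW (hSW'.trans (Finset.coe_subset.2 (W.filter_subset _))),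
    conflictFree_insert_iff.2 ⟨hmA, hmm, hSnb, hS⟩, fun v hv hvA hvS => ?_⟩
  have hvm : v ≠ m := fun h => hvS (h ▸ mem_insert m S)
  by_cases hvW' : v ∈ W'
  · obtain h | ⟨c, hc, hcv⟩ := hcov v hvW' hvA fun h => hvS (mem_insert_of_mem m h)
    · exact Or.inl h
    · exact Or.inr ⟨c, mem_insert_of_mem m hc, hcv⟩
  have hconf : F.R m v ∨ F.R v m := by
    by_contra! h
    exact hvW' (Finset.mem_filter.2 ⟨hv, hvm, h.1, h.2⟩)
  exact Or.inr ⟨m, mem_insert m S, hconf.elim Or.inl fun hvm' =>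
    mem_candidates_of_not_precedes he hvm hvm' (hmin v (Finset.mem_filter.2 ⟨hv, hvA⟩))⟩

theorem Finitary.exists_cf15 (hF : Finitary F) : ∃ S, CF15 F S := by
  classical
  obtain ⟨e, he⟩ := hF.exists_injOn_SCCof
  choose sol hsolW hsol hcov using exists_finset_solution he
  obtain ⟨𝒰, h𝒰⟩ := Ultrafilter.exists_le (atTop : Filter (Finset α))
  refine ⟨{v | ∀ᶠ W in (𝒰 : Filter (Finset α)), v ∈ sol W},
    cf15_iff.2 ⟨⟨fun v hv => ?_, fun a ha b hb hab => ?_⟩, ?_⟩⟩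
  · obtain ⟨W, hW⟩ := hv.exists
    exact (hsol W).1 hW
  · obtain ⟨W, haW, hbW⟩ := (ha.and hb).exists
    exact (hsol W).2 a haW b hbW hab
  intro v hvA hvS
  by_cases hvv : F.R v v
  · exact Or.inl hvv
  have hmem : ∀ᶠ W in (𝒰 : Filter (Finset α)), v ∈ W :=
    Eventually.mono (h𝒰 (eventually_ge_atTop {v})) fun _ hW => Finset.singleton_subset_iff.1 hW
  have hcand : ∀ᶠ W in (𝒰 : Filter (Finset α)), ∃ c ∈ candidates F e v, c ∈ sol W :=
    (hmem.and (Ultrafilter.eventually_not.2 hvS)).mono fun W ⟨hvW, hvW'⟩ =>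
      ((hcov W v hvW hvA hvW').resolve_left hvv).imp fun _ ⟨hc, hcv⟩ => ⟨hcv, hc⟩
  obtain ⟨c, hcv, hc⟩ :=
    (Ultrafilter.eventually_exists_mem_iff (candidates_finite hF (he v))).1 hcand
  exact isBlocked_of_mem_candidates hc hcv

theorem exists_cf15_inter_eq (hF : Finitary F) {U S : Set α} (hU : F.IsUnattacked U)
    (hS : CF15 (F.restrict U) S) :
    ∃ T, CF15 F T ∧ S = T ∩ U := by
  obtain ⟨hcf, hcov⟩ := cf15_iff.1 hS
  obtain ⟨hcfF, hSU⟩ := conflictFree_restrict_iff.1 hcf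
  let V : Set α := {x | x ∉ U ∧ ∀ s ∈ S, ¬ F.R s x}
  obtain ⟨T, hT⟩ := (hF.restrict (U := V)).exists_cf15
  obtain ⟨hTcf, hTcov⟩ := cf15_iff.1 hT
  obtain ⟨hTcfF, hTV⟩ := conflictFree_restrict_iff.1 hTcf
  refine ⟨S ∪ T, cf15_iff.2 ⟨⟨union_subset hcfF.1 hTcfF.1, ?_⟩, fun v hvA hvST => ?_⟩, ?_⟩
  · rintro a (ha | ha) b (hb | hb) hab
    · exact hcfF.2 a ha b hb hab
    · exact (hTV hb).2 a ha hab
    · exact (hTV ha).1 (hU.mem_of_attacks hab (hSU hb))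
    · exact hTcfF.2 a ha b hb hab
  · by_cases hvU : v ∈ U
    · exact ((hcov v ⟨hvA, hvU⟩ fun h => hvST (Or.inl h)).of_restrict).mono subset_union_left
    by_cases hatt : ∃ s ∈ S, F.R s v
    · obtain ⟨s, hs, h⟩ := hatt
      exact Or.inr (Or.inl ⟨s, Or.inl hs, h⟩)
    push Not at hatt
    exact ((hTcov v ⟨hvA, hvU, hatt⟩ fun h => hvST (Or.inr h)).of_restrict).mono
      subset_union_right
  · have hTU : T ∩ U = ∅ := eq_empty_of_forall_notMem fun x hx => (hTV hx.1).1 hx.2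
    rw [union_inter_distrib_right, inter_eq_left.2 hSU, hTU, union_empty]

end AF

theorem statement3_general {α : Type u} (F : AF α) (hF : AF.Finitary F)
    (U : Set α)
    (hunatt : ∀ a ∈ F.A \ U, ∀ b ∈ U, ¬ F.R a b) :
    {S | AF.CF15 (F.restrict U) S} = {T | ∃ S, AF.CF15 F S ∧ T = S ∩ U} :=
  Set.ext fun _ => ⟨fun hT => AF.exists_cf15_inter_eq hF hunatt hT,
    fun ⟨_, hS, hT⟩ => hT ▸ AF.cf15_restrict_inter hunatt hS⟩

/-- cf1.5 satisfies finitary directionality. -/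
theorem statement3 {α : Type u} (F : AF α) (hF : AF.Finitary F)
    (U : Set α) (hU : U ⊆ F.A)
    (hunatt : ∀ a ∈ F.A \ U, ∀ b ∈ U, ¬ F.R a b) :
    {S | AF.CF15 (F.restrict U) S} = {T | ∃ S, AF.CF15 F S ∧ T = S ∩ U} :=
  statement3_general F hF U hunatt
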